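/- arXiv:2502.05276 — 2 statements merged into one kernel-verified Lean document; each statement's English description precedes it below -/
import Mathlib

section
/- A Rees matrix semigroup M(H; I, J; ⟨·,·⟩) with nonempty I and J is simple: it has no nonempty proper two-sided ideal. -/
/-- Multiplication of the Rees matrix semigroup `M(H; I, J; p)` on `I × H × J`. -/
def reesMul {H I J : Type*} [Group H] (p : J × I → H)
    (a b : I × H × J) : I × H × J :=
  (a.1, a.2.1 * p (a.2.2, b.1) * b.2.1, b.2.2)

theorem exists_reesMul_reesMul_eq {H I J : Type*} [Group H] (p : J × I → H)
    (a t : I × H × J) : ∃ s s', reesMul p (reesMul p s a) s' = t := by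
  obtain ⟨i₀, h₀, j₀⟩ := a
  obtain ⟨i, h, j⟩ := t
  -- `s` sets the row index, `s'` the column index and cancels the group entry.
  refine ⟨(i, 1, j₀), (i, (p (j₀, i₀) * h₀ * p (j₀, i))⁻¹ * h, j), ?_⟩
  simp [reesMul, mul_assoc]

theorem reesMatrixSemigroup_simple_general {H I J : Type*} [Group H]
    (p : J × I → H) (A : Set (I × H × J))
    (hA : ∀ a ∈ A, ∀ s : I × H × J, reesMul p s a ∈ A ∧ reesMul p a s ∈ A)
    (hne : A.Nonempty) :
    A = Set.univ := by
  obtain ⟨a, ha⟩ := hne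
  refine Set.eq_univ_of_forall fun t => ?_
  obtain ⟨s, s', rfl⟩ := exists_reesMul_reesMul_eq p a t
  exact (hA _ (hA a ha s).1 s').2

/-- A Rees matrix semigroup with nonempty `I` and `J` is simple: any nonempty
two-sided ideal is the whole semigroup. -/
theorem reesMatrixSemigroup_simple {H I J : Type*} [Group H] [Nonempty I] [Nonempty J]
    (p : J × I → H) (A : Set (I × H × J))
    (hA : ∀ a ∈ A, ∀ s : I × H × J, reesMul p s a ∈ A ∧ reesMul p a s ∈ A)
    (hne : A.Nonempty) :
    A = Set.univ :=
  reesMatrixSemigroup_simple_general p A hA hne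
end

section
/- Let S be a finite nonempty semigroup. Then S has a left zero or a right zero if and only if S is K-thin and its group completion GS is trivial. (Concretely, in terms of the Rees structure: if z is a left zero of S, then {z} is a minimal right ideal and the structure group H of K(S) is trivial with |J| = 1; conversely if K(S) ≅ M(1; {*}, J; ⟨·,·⟩) with trivial group, then every element of K(S) is a left zero.) -/
/-!
If `z` is a left zero, the left zeros form a nonempty ideal, so they contain `K`; then `K` is
left simple since `k = k * a` for all `k, a ∈ K`, and every homomorphism `f` to a group satisfies
`f z * f x = f z`, hence `f x = 1`.

Conversely, if `K` is left simple then `K * a = K` for `a ∈ K`, so `x ↦ x * a` is a bijection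
of the finite set `K`. Hence so is `x ↦ x * s` for every `s ∈ S`: followed by `· * a` it becomes
`· * (s * a)`. This gives an anti-homomorphism from `S` to `Perm K`; if it is trivial, every
element of `K` is a left zero. The right simple case is the mirror image.
-/

/-- A two-sided ideal of a semigroup: `SA ⊆ A` and `AS ⊆ A`. -/
def IsIdeal {S : Type*} [Semigroup S] (A : Set S) : Prop :=
  ∀ a ∈ A, ∀ s : S, s * a ∈ A ∧ a * s ∈ A

open Set

universe u

variable {S : Type u} [Semigroup S] {K : Set S}

def IsLeftZero (z : S) : Prop := ∀ x : S, z * x = z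

def IsRightZero (z : S) : Prop := ∀ x : S, x * z = z

def IsLeftSimple (K : Set S) : Prop :=
  ∀ A : Set S, A ⊆ K → A.Nonempty → (∀ a ∈ A, ∀ s ∈ K, s * a ∈ A) → A = K

def IsRightSimple (K : Set S) : Prop :=
  ∀ A : Set S, A ⊆ K → A.Nonempty → (∀ a ∈ A, ∀ s ∈ K, a * s ∈ A) → A = K

variable (S) in
def HasTrivialGroupCompletion : Prop :=
  ∀ (Γ : Type u) [Group Γ], ∀ f : S →ₙ* Γ, ∀ x : S, f x = 1

theorem isIdeal_setOf_isLeftZero : IsIdeal {z : S | IsLeftZero z} := fun a ha s =>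
  ⟨fun x => by rw [mul_assoc, ha], fun x => by rw [ha s, ha x]⟩

theorem isIdeal_setOf_isRightZero : IsIdeal {z : S | IsRightZero z} := fun a ha s =>
  ⟨fun x => by rw [ha s, ha x], fun x => by rw [← mul_assoc, ha]⟩

theorem isLeftSimple_of_forall_isLeftZero (hK : ∀ k ∈ K, IsLeftZero k) :
    IsLeftSimple K := by
  rintro A hAK ⟨a, ha⟩ hA
  refine hAK.antisymm fun k hk => ?_
  simpa only [hK k hk a] using hA a ha k hk

theorem isRightSimple_of_forall_isRightZero (hK : ∀ k ∈ K, IsRightZero k) :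
    IsRightSimple K := by
  rintro A hAK ⟨a, ha⟩ hA
  refine hAK.antisymm fun k hk => ?_
  simpa only [hK k hk a] using hA a ha k hk

theorem IsLeftZero.map_eq_one {M : Type*} [Monoid M] [IsLeftCancelMul M] {z : S}
    (hz : IsLeftZero z) (f : S →ₙ* M) (x : S) : f x = 1 :=
  mul_eq_left.mp (by rw [← map_mul, hz])

theorem IsRightZero.map_eq_one {M : Type*} [Monoid M] [IsRightCancelMul M] {z : S}
    (hz : IsRightZero z) (f : S →ₙ* M) (x : S) : f x = 1 :=
  mul_eq_right.mp (by rw [← map_mul, hz])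

theorem IsLeftSimple.surjOn_mul_right (hK : IsIdeal K) (hl : IsLeftSimple K) {a : S}
    (ha : a ∈ K) : SurjOn (· * a) K K := by
  refine (hl ((· * a) '' K) ?_ ⟨a * a, a, ha, rfl⟩ ?_).ge
  · rintro _ ⟨x, -, rfl⟩
    exact (hK a ha x).1
  · rintro _ ⟨x, hx, rfl⟩ s -
    exact ⟨s * x, (hK x hx s).1, mul_assoc s x a⟩

theorem IsRightSimple.surjOn_mul_left (hK : IsIdeal K) (hr : IsRightSimple K) {a : S}
    (ha : a ∈ K) : SurjOn (a * ·) K K := by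
  refine (hr ((a * ·) '' K) ?_ ⟨a * a, a, ha, rfl⟩ ?_).ge
  · rintro _ ⟨x, hx, rfl⟩
    exact (hK x hx a).1
  · rintro _ ⟨x, hx, rfl⟩ s -
    exact ⟨x * s, (hK x hx s).2, (mul_assoc a x s).symm⟩

theorem IsLeftSimple.bijOn_mul_right [Finite S] (hK : IsIdeal K) (hKne : K.Nonempty)
    (hl : IsLeftSimple K) (s : S) : BijOn (· * s) K K := by
  obtain ⟨k, hk⟩ := hKne
  have hsk : s * k ∈ K := (hK k hk s).1
  have hinj : InjOn (· * (s * k)) K :=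
    ((toFinite K).surjOn_iff_bijOn_of_mapsTo fun x _ => (hK _ hsk x).1).mp
      (hl.surjOn_mul_right hK hsk) |>.injOn
  refine ((toFinite K).injOn_iff_bijOn_of_mapsTo fun x hx => (hK x hx s).2).mp ?_
  intro x hx y hy hxy
  exact hinj hx hy (by simpa only [mul_assoc] using congrArg (· * k) hxy)

theorem IsRightSimple.bijOn_mul_left [Finite S] (hK : IsIdeal K) (hKne : K.Nonempty)
    (hr : IsRightSimple K) (s : S) : BijOn (s * ·) K K := by
  obtain ⟨k, hk⟩ := hKne
  have hks : k * s ∈ K := (hK k hk s).2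
  have hinj : InjOn (k * s * ·) K :=
    ((toFinite K).surjOn_iff_bijOn_of_mapsTo fun x hx => (hK x hx _).1).mp
      (hr.surjOn_mul_left hK hks) |>.injOn
  refine ((toFinite K).injOn_iff_bijOn_of_mapsTo fun x hx => (hK x hx s).1).mp ?_
  intro x hx y hy hxy
  exact hinj hx hy (by simpa only [mul_assoc] using congrArg (k * ·) hxy)

noncomputable def rightMulPerm (h : ∀ s : S, BijOn (· * s) K K) : S →ₙ* (Equiv.Perm K)ᵐᵒᵖ where
  toFun s := MulOpposite.op ((h s).equiv _)
  map_mul' s t := by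
    apply MulOpposite.unop_injective
    ext x
    exact (mul_assoc (x : S) s t).symm

noncomputable def leftMulPerm (h : ∀ s : S, BijOn (s * ·) K K) : S →ₙ* Equiv.Perm K where
  toFun s := (h s).equiv _
  map_mul' s t := by
    ext x
    exact mul_assoc s t x

theorem IsLeftSimple.isLeftZero_of_hasTrivialGroupCompletion [Finite S] (hK : IsIdeal K)
    (hl : IsLeftSimple K)
    (htriv : HasTrivialGroupCompletion S) {k : S} (hk : k ∈ K) :
    IsLeftZero k := fun s =>
  congrArg (fun σ => (σ.unop ⟨k, hk⟩ : S))
    (htriv _ (rightMulPerm (hl.bijOn_mul_right hK ⟨k, hk⟩)) s)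

theorem IsRightSimple.isRightZero_of_hasTrivialGroupCompletion [Finite S] (hK : IsIdeal K)
    (hr : IsRightSimple K)
    (htriv : HasTrivialGroupCompletion S) {k : S} (hk : k ∈ K) :
    IsRightZero k := fun s =>
  congrArg (fun σ => (σ ⟨k, hk⟩ : S))
    (htriv _ (leftMulPerm (hr.bijOn_mul_left hK ⟨k, hk⟩)) s)

theorem leftOrRightZero_iff_kthin_and_trivial_completion_general
    (S : Type) [Semigroup S] [Finite S]
    (K : Set S) (hK : IsIdeal K) (hKne : K.Nonempty)
    (hmin : ∀ A : Set S, IsIdeal A → A.Nonempty → K ⊆ A) :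
    ((∃ z : S, ∀ x : S, z * x = z) ∨ (∃ z : S, ∀ x : S, x * z = z)) ↔
      (((∀ A : Set S, A ⊆ K → A.Nonempty →
            (∀ a ∈ A, ∀ s ∈ K, s * a ∈ A) → A = K) ∨
          (∀ A : Set S, A ⊆ K → A.Nonempty →
            (∀ a ∈ A, ∀ s ∈ K, a * s ∈ A) → A = K)) ∧
        ∀ (Γ : Type) [Group Γ], ∀ f : S →ₙ* Γ, ∀ x : S, f x = 1) := by
  constructor
  · rintro (⟨z, hz⟩ | ⟨z, hz⟩)
    · have hKz : ∀ k ∈ K, IsLeftZero k := hmin _ isIdeal_setOf_isLeftZero ⟨z, hz⟩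
      exact ⟨Or.inl (isLeftSimple_of_forall_isLeftZero hKz),
        fun _ _ f => IsLeftZero.map_eq_one hz f⟩
    · have hKz : ∀ k ∈ K, IsRightZero k := hmin _ isIdeal_setOf_isRightZero ⟨z, hz⟩
      exact ⟨Or.inr (isRightSimple_of_forall_isRightZero hKz),
        fun _ _ f => IsRightZero.map_eq_one hz f⟩
  · obtain ⟨k, hk⟩ := hKne
    rintro ⟨hl | hr, htriv⟩
    · exact Or.inl ⟨k, IsLeftSimple.isLeftZero_of_hasTrivialGroupCompletion hK hl htriv hk⟩
    · exact Or.inr ⟨k, IsRightSimple.isRightZero_of_hasTrivialGroupCompletion hK hr htriv hk⟩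

/-- A finite nonempty semigroup `S` has a left zero or a right zero if and only
if `S` is K-thin (its minimal ideal `K(S)` is left-simple or right-simple) and
its group completion `GS` is trivial (equivalently, every semigroup homomorphism
from `S` to a group is trivial). -/
theorem leftOrRightZero_iff_kthin_and_trivial_completion
    (S : Type) [Semigroup S] [Finite S] [Nonempty S]
    (K : Set S) (hK : IsIdeal K) (hKne : K.Nonempty)
    (hmin : ∀ A : Set S, IsIdeal A → A.Nonempty → K ⊆ A) :
    ((∃ z : S, ∀ x : S, z * x = z) ∨ (∃ z : S, ∀ x : S, x * z = z)) ↔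
      (((∀ A : Set S, A ⊆ K → A.Nonempty →
            (∀ a ∈ A, ∀ s ∈ K, s * a ∈ A) → A = K) ∨
          (∀ A : Set S, A ⊆ K → A.Nonempty →
            (∀ a ∈ A, ∀ s ∈ K, a * s ∈ A) → A = K)) ∧
        ∀ (Γ : Type) [Group Γ], ∀ f : S →ₙ* Γ, ∀ x : S, f x = 1) :=
  leftOrRightZero_iff_kthin_and_trivial_completion_general S K hK hKne hmin
end
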